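/- arXiv:1111.1020 — 3 statements merged into one kernel-verified Lean document; each statement's English description precedes it below -/
import Mathlib

section
/- Consider a Potts model: a pairwise Markov random field whose edge potentials are ψ_{uv}(i,j) = 1 if i = j and ψ_{uv}(i,j) = ε if i ≠ j, for a fixed parameter ε ∈ (0,1), with arbitrary node potentials ψ_u: X → (0,∞). If max_{u∈V} { ((deg(u) − 1)/ε^{deg(u)}) · max_{j∈X} ψ_u(j)/∑_{ℓ∈X} ψ_u(ℓ) } < (1/(4(1 − ε)(1 + (d−1)ε)))^{1/2}, then the BP update function F is a contraction on B with respect to the Euclidean norm: there exists L < 1 such that ‖F(m) − F(m′)‖₂ ≤ L‖m − m′‖₂ for all m, m′ ∈ B. -/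
open Finset MeasureTheory Filter

noncomputable def l2norm {ι : Type*} [Fintype ι] (x : ι → ℝ) : ℝ :=
  Real.sqrt (∑ i, x i ^ 2)

structure GM (V : Type*) [Fintype V] [DecidableEq V] where
  G : SimpleGraph V
  adjDec : DecidableRel G.Adj
  d : ℕ
  ψn : V → Fin d → ℝ
  ψe : V → V → Fin d → Fin d → ℝ

attribute [instance] GM.adjDec

namespace GM

variable {V : Type*} [Fintype V] [DecidableEq V] (P : GM V)

abbrev DirEdge : Type _ := {e : V × V // P.G.Adj e.1 e.2}

abbrev Msg : Type _ := P.DirEdge × Fin P.d → ℝ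

noncomputable def bmass (e : P.DirEdge) (j : Fin P.d) : ℝ :=
  P.ψn e.1.1 j * ∑ i, P.ψe e.1.1 e.1.2 i j

noncomputable def Gam (e : P.DirEdge) (i j : Fin P.d) : ℝ :=
  P.ψe e.1.1 e.1.2 i j * P.ψn e.1.1 j / P.bmass e j

def revEdge (e : P.DirEdge) (w : {x // x ∈ (P.G.neighborFinset e.1.1).erase e.1.2}) :
    P.DirEdge :=
  ⟨(w.1, e.1.1), by
    have h := Finset.mem_of_mem_erase w.2
    rw [SimpleGraph.mem_neighborFinset] at h
    exact h.symm⟩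

noncomputable def Mprod (m : P.Msg) (e : P.DirEdge) (j : Fin P.d) : ℝ :=
  ∏ w ∈ ((P.G.neighborFinset e.1.1).erase e.1.2).attach, m (P.revEdge e w, j)

noncomputable def bp (m : P.Msg) : P.Msg := fun p =>
  (∑ j, P.ψe p.1.1.1 p.1.1.2 p.2 j * P.ψn p.1.1.1 j * P.Mprod m p.1 j) /
  (∑ i, ∑ j, P.ψe p.1.1.1 p.1.1.2 i j * P.ψn p.1.1.1 j * P.Mprod m p.1 j)

noncomputable def beta0 (e : P.DirEdge) (i : Fin P.d) : ℝ := ⨅ j, P.Gam e i j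

noncomputable def mu0 (e : P.DirEdge) (i : Fin P.d) : ℝ := ⨆ j, P.Gam e i j

def ball : Set P.Msg :=
  {m | ∀ e : P.DirEdge, (∑ i, m (e, i)) = 1 ∧
    ∀ i, P.beta0 e i ≤ m (e, i) ∧ m (e, i) ≤ P.mu0 e i}

noncomputable def Cpsi : ℝ :=
  4 * (∑ e : P.DirEdge, ⨆ i, P.mu0 e i) / (∑ e : P.DirEdge, ⨅ i, P.beta0 e i)

noncomputable def sbpProb (m : P.Msg) (e : P.DirEdge) (j : Fin P.d) : ℝ :=
  P.bmass e j * P.Mprod m e j / ∑ k, P.bmass e k * P.Mprod m e k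

noncomputable def graphDiam : ℕ :=
  Finset.univ.sup fun pr : V × V => P.G.dist pr.1 pr.2

def IsSBP {Ω : Type*} {mΩ : MeasurableSpace Ω} (μ : Measure Ω)
    (ℱ : Filtration ℕ mΩ) (α : ℕ → ℝ) (m0 : P.Msg)
    (M : ℕ → Ω → P.Msg) (J : ℕ → Ω → P.DirEdge → Fin P.d) : Prop :=
  (∀ ω, M 0 ω = m0) ∧
  (∀ t, Measurable[ℱ t] (M t)) ∧
  (∀ t, Measurable[ℱ (t+1)] (J (t+1))) ∧
  (∀ t ω (e : P.DirEdge) (i : Fin P.d),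
      M (t+1) ω (e, i) = (1 - α t) * M t ω (e, i) + α t * P.Gam e i (J (t+1) ω e)) ∧
  (∀ t (jj : P.DirEdge → Fin P.d),
      (μ[(fun ω => if ∀ e, J (t+1) ω e = jj e then (1:ℝ) else 0) | ℱ t])
        =ᵐ[μ] fun ω => ∏ e : P.DirEdge, P.sbpProb (M t ω) e (jj e))

end GM


section Aux2
open Finset


section l2
variable {ι : Type*} [Fintype ι]

lemma l2_cs (b x : ι → ℝ) :
    |∑ i, b i * x i| ≤ Real.sqrt (∑ i, b i ^ 2) * Real.sqrt (∑ i, x i ^ 2) := by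
  have h := Finset.sum_mul_sq_le_sq_mul_sq Finset.univ b x
  have h0 : 0 ≤ ∑ i, b i ^ 2 := by positivity
  calc |∑ i, b i * x i| = Real.sqrt ((∑ i, b i * x i) ^ 2) := by
        rw [Real.sqrt_sq_eq_abs]
    _ ≤ Real.sqrt ((∑ i, b i ^ 2) * ∑ i, x i ^ 2) := Real.sqrt_le_sqrt h
    _ = _ := Real.sqrt_mul h0 _

lemma l2_add (f g : ι → ℝ) :
    Real.sqrt (∑ i, (f i + g i) ^ 2) ≤
      Real.sqrt (∑ i, f i ^ 2) + Real.sqrt (∑ i, g i ^ 2) := by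
  have h0 : 0 ≤ ∑ i, f i ^ 2 := by positivity
  have h1 : 0 ≤ ∑ i, g i ^ 2 := by positivity
  have hcs := le_trans (le_abs_self _) (l2_cs f g)
  have key : ∑ i, (f i + g i) ^ 2 ≤
      (Real.sqrt (∑ i, f i ^ 2) + Real.sqrt (∑ i, g i ^ 2)) ^ 2 := by
    have expand : ∑ i, (f i + g i) ^ 2 =
        (∑ i, f i ^ 2) + 2 * (∑ i, f i * g i) + (∑ i, g i ^ 2) := by
      rw [Finset.mul_sum, ← Finset.sum_add_distrib, ← Finset.sum_add_distrib]
      congr 1; ext i; ring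
    rw [expand, add_sq, Real.sq_sqrt h0, Real.sq_sqrt h1]
    nlinarith [hcs]
  calc Real.sqrt (∑ i, (f i + g i) ^ 2)
      ≤ Real.sqrt ((Real.sqrt (∑ i, f i ^ 2) + Real.sqrt (∑ i, g i ^ 2)) ^ 2) :=
        Real.sqrt_le_sqrt key
    _ = _ := Real.sqrt_sq (by positivity)

lemma l2_scale {M : ℝ} (hM : 0 ≤ M) (c x : ι → ℝ) (h : ∀ i, |c i| ≤ M) :
    Real.sqrt (∑ i, (c i * x i) ^ 2) ≤ M * Real.sqrt (∑ i, x i ^ 2) := by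
  have key : ∑ i, (c i * x i) ^ 2 ≤ M ^ 2 * ∑ i, x i ^ 2 := by
    rw [Finset.mul_sum]
    refine Finset.sum_le_sum fun i _ => ?_
    have := h i
    have h2 : c i ^ 2 ≤ M ^ 2 := by nlinarith [abs_nonneg (c i), sq_abs (c i)]
    nlinarith [sq_nonneg (x i)]
  calc Real.sqrt (∑ i, (c i * x i) ^ 2) ≤ Real.sqrt (M ^ 2 * ∑ i, x i ^ 2) :=
        Real.sqrt_le_sqrt key
    _ = M * Real.sqrt (∑ i, x i ^ 2) := by
        rw [Real.sqrt_mul (by positivity), Real.sqrt_sq hM]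

end l2

/-- Single-coordinate perturbation bound for the normalized vector `i ↦ b i * x i / ∑ b x`. -/
lemma bp_step {d : ℕ} (hd : 0 < d) (b x x' : Fin d → ℝ) (hb : ∀ j, 0 < b j)
    (ε Z K : ℝ) (hε0 : 0 < ε) (hε1 : ε ≤ 1) (hZ : 0 < Z) (hK0 : 0 ≤ K)
    (hK : ∀ i, b i ≤ K * ∑ ℓ, b ℓ)
    (hx : ∀ j, ε/Z ≤ x j ∧ x j ≤ 1/Z) (hx' : ∀ j, ε/Z ≤ x' j ∧ x' j ≤ 1/Z) :
    Real.sqrt (∑ i, (b i * x i / (∑ j, b j * x j) - b i * x' i / (∑ j, b j * x' j)) ^ 2)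
      ≤ 2*K*Z/ε^2 * Real.sqrt (∑ j, (x j - x' j)^2) := by
  haveI : Nonempty (Fin d) := ⟨⟨0, hd⟩⟩
  set S := ∑ j, b j * x j with hSdef
  set S' := ∑ j, b j * x' j with hS'def
  have hBsum : 0 < ∑ ℓ, b ℓ := Finset.sum_pos (fun j _ => hb j) Finset.univ_nonempty
  have hxpos : ∀ j, 0 < x j := fun j => lt_of_lt_of_le (by positivity) (hx j).1
  have hx'pos : ∀ j, 0 < x' j := fun j => lt_of_lt_of_le (by positivity) (hx' j).1
  have hS : 0 < S := Finset.sum_pos (fun j _ => mul_pos (hb j) (hxpos j)) Finset.univ_nonempty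
  have hS' : 0 < S' := Finset.sum_pos (fun j _ => mul_pos (hb j) (hx'pos j)) Finset.univ_nonempty
  have hSlb : (ε/Z) * ∑ ℓ, b ℓ ≤ S := by
    rw [Finset.mul_sum]
    exact Finset.sum_le_sum fun j _ => by
      rw [mul_comm (ε/Z)]; exact mul_le_mul_of_nonneg_left (hx j).1 (hb j).le
  have hS'lb : (ε/Z) * ∑ ℓ, b ℓ ≤ S' := by
    rw [Finset.mul_sum]
    exact Finset.sum_le_sum fun j _ => by
      rw [mul_comm (ε/Z)]; exact mul_le_mul_of_nonneg_left (hx' j).1 (hb j).le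
  -- bound b i / S ≤ K*Z/ε
  have hbS : ∀ i, b i / S ≤ K * Z / ε := by
    intro i
    rw [div_le_div_iff₀ hS hε0]
    calc b i * ε ≤ (K * ∑ ℓ, b ℓ) * ε := by
          exact mul_le_mul_of_nonneg_right (hK i) hε0.le
      _ = K * Z * ((ε/Z) * ∑ ℓ, b ℓ) := by field_simp
      _ ≤ K * Z * S := mul_le_mul_of_nonneg_left hSlb (mul_nonneg hK0 hZ.le)
  set q' : Fin d → ℝ := fun i => b i * x' i / S' with hq'def
  have hq'pos : ∀ i, 0 < q' i := fun i => div_pos (mul_pos (hb i) (hx'pos i)) hS'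
  have hq'sum : ∑ i, q' i = 1 := by
    rw [hq'def, ← Finset.sum_div, ← hS'def, div_self hS'.ne']
  have hq'le : ∀ i, q' i ≤ K / ε := by
    intro i
    rw [hq'def, div_le_div_iff₀ hS' hε0]
    calc b i * x' i * ε ≤ (K * ∑ ℓ, b ℓ) * (1/Z) * ε := by
          have h1 : b i * x' i ≤ (K * ∑ ℓ, b ℓ) * (1/Z) :=
            mul_le_mul (hK i) (hx' i).2 (hx'pos i).le (mul_nonneg hK0 hBsum.le)
          exact mul_le_mul_of_nonneg_right h1 hε0.le
      _ = K * ((ε/Z) * ∑ ℓ, b ℓ) := by field_simp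
      _ ≤ K * S' := mul_le_mul_of_nonneg_left hS'lb hK0
  -- the key identity
  have hid : ∀ i, b i * x i / S - b i * x' i / S' =
      (b i / S) * (x i - x' i) + q' i * ((S' - S)/S) := by
    intro i
    have h1 : S - S' = ∑ j, b j * (x j - x' j) := by
      rw [hSdef, hS'def, ← Finset.sum_sub_distrib]; congr 1; ext j; ring
    have e : q' i = b i * x' i / S' := rfl
    rw [e]
    field_simp
    ring
  rw [Finset.sum_congr rfl (fun i _ => by rw [hid i])]
  have tri := l2_add (fun i => (b i / S) * (x i - x' i)) (fun i => q' i * ((S' - S)/S))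
  refine le_trans tri ?_
  -- term 1
  have t1 : Real.sqrt (∑ i, ((b i / S) * (x i - x' i)) ^ 2)
      ≤ (K*Z/ε) * Real.sqrt (∑ j, (x j - x' j)^2) := by
    refine l2_scale (by positivity) _ _ fun i => ?_
    rw [abs_of_pos (div_pos (hb i) hS)]
    exact hbS i
  -- term 2
  have hΔ : |S' - S| ≤ Real.sqrt (∑ j, (b j / S)^2) * Real.sqrt (∑ j, (x j - x' j)^2) * S := by
    have h1 : S - S' = ∑ j, (b j) * (x j - x' j) := by
      rw [hSdef, hS'def, ← Finset.sum_sub_distrib]; congr 1; ext j; ring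
    have h2 : |S' - S| = |∑ j, (b j) * (x j - x' j)| := by rw [abs_sub_comm, h1]
    rw [h2]
    have hcs := l2_cs b (fun j => x j - x' j)
    have h3 : Real.sqrt (∑ j, b j ^ 2) = Real.sqrt (∑ j, (b j / S)^2) * S := by
      have e2 : ∑ j, b j ^ 2 = (∑ j, (b j / S)^2) * S^2 := by
        rw [Finset.sum_mul]
        refine Finset.sum_congr rfl fun j _ => ?_
        field_simp
      rw [e2, Real.sqrt_mul (by positivity), Real.sqrt_sq hS.le]
    rw [h3, mul_right_comm] at hcs
    exact hcs
  have hq'sq : ∑ i, q' i ^ 2 ≤ K / ε := by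
    calc ∑ i, q' i ^ 2 ≤ ∑ i, (K/ε) * q' i := by
          refine Finset.sum_le_sum fun i _ => ?_
          rw [sq]
          exact mul_le_mul_of_nonneg_right (hq'le i) (hq'pos i).le
      _ = (K/ε) * ∑ i, q' i := by rw [Finset.mul_sum]
      _ = K/ε := by rw [hq'sum, mul_one]
  have hbSsq : ∑ j, (b j / S)^2 ≤ K * Z^2 / ε^2 := by
    have hsum : ∑ j, b j / S ≤ Z / ε := by
      rw [← Finset.sum_div, div_le_div_iff₀ hS hε0]
      calc (∑ ℓ, b ℓ) * ε = Z * ((ε/Z) * ∑ ℓ, b ℓ) := by field_simp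
        _ ≤ Z * S := mul_le_mul_of_nonneg_left hSlb hZ.le
    calc ∑ j, (b j / S)^2 ≤ ∑ j, (K*Z/ε) * (b j / S) := by
          refine Finset.sum_le_sum fun j _ => ?_
          rw [sq]
          exact mul_le_mul_of_nonneg_right (hbS j) (div_pos (hb j) hS).le
      _ = (K*Z/ε) * ∑ j, b j / S := by rw [Finset.mul_sum]
      _ ≤ (K*Z/ε) * (Z/ε) := mul_le_mul_of_nonneg_left hsum (by positivity)
      _ = K * Z^2 / ε^2 := by ring
  have t2 : Real.sqrt (∑ i, (q' i * ((S' - S)/S)) ^ 2)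
      ≤ (K*Z/ε^2) * Real.sqrt (∑ j, (x j - x' j)^2) := by
    have e1 : ∑ i, (q' i * ((S' - S)/S)) ^ 2 = (∑ i, q' i ^ 2) * ((S' - S)/S)^2 := by
      rw [Finset.sum_mul]; congr 1; ext i; ring
    rw [e1, Real.sqrt_mul (by positivity : (0:ℝ) ≤ ∑ i, q' i ^ 2), Real.sqrt_sq_eq_abs]
    have h4 : |(S' - S)/S| ≤ Real.sqrt (∑ j, (b j / S)^2) * Real.sqrt (∑ j, (x j - x' j)^2) := by
      rw [abs_div, abs_of_pos hS, div_le_iff₀ hS]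
      exact hΔ
    calc Real.sqrt (∑ i, q' i ^ 2) * |(S' - S)/S|
        ≤ Real.sqrt (K/ε) * (Real.sqrt (K * Z^2/ε^2) * Real.sqrt (∑ j, (x j - x' j)^2)) := by
          refine mul_le_mul (Real.sqrt_le_sqrt hq'sq) ?_ (abs_nonneg _) (Real.sqrt_nonneg _)
          refine le_trans h4 ?_
          exact mul_le_mul_of_nonneg_right (Real.sqrt_le_sqrt hbSsq) (Real.sqrt_nonneg _)
      _ = Real.sqrt ((K/ε) * (K * Z^2/ε^2)) * Real.sqrt (∑ j, (x j - x' j)^2) := by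
          rw [Real.sqrt_mul (div_nonneg hK0 hε0.le)]; ring
      _ ≤ (K*Z/ε^2) * Real.sqrt (∑ j, (x j - x' j)^2) := by
          refine mul_le_mul_of_nonneg_right ?_ (Real.sqrt_nonneg _)
          rw [show (K/ε) * (K * Z^2/ε^2) = (K*Z)^2/ε^3 by ring]
          rw [show (K*Z/ε^2) = Real.sqrt ((K*Z/ε^2)^2) from (Real.sqrt_sq (by positivity)).symm]
          refine Real.sqrt_le_sqrt ?_
          rw [div_pow]
          refine div_le_div_of_nonneg_left (by positivity) (by positivity) ?_
          calc (ε^2)^2 = ε^3 * ε := by ring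
            _ ≤ ε^3 * 1 := mul_le_mul_of_nonneg_left hε1 (by positivity)
            _ = ε^3 := by ring
  calc Real.sqrt (∑ i, ((b i / S) * (x i - x' i)) ^ 2)
        + Real.sqrt (∑ i, (q' i * ((S' - S)/S)) ^ 2)
      ≤ (K*Z/ε) * Real.sqrt (∑ j, (x j - x' j)^2)
        + (K*Z/ε^2) * Real.sqrt (∑ j, (x j - x' j)^2) := add_le_add t1 t2
    _ ≤ 2*K*Z/ε^2 * Real.sqrt (∑ j, (x j - x' j)^2) := by
        have h5 : K*Z/ε ≤ K*Z/ε^2 := by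
          apply div_le_div_of_nonneg_left (by positivity) (by positivity)
          calc ε^2 = ε * ε := sq ε
            _ ≤ 1 * ε := mul_le_mul_of_nonneg_right hε1 hε0.le
            _ = ε := one_mul ε
        have h6 := mul_le_mul_of_nonneg_right h5 (Real.sqrt_nonneg (∑ j, (x j - x' j)^2))
        calc K * Z / ε * Real.sqrt (∑ j, (x j - x' j)^2)
              + K * Z / ε ^ 2 * Real.sqrt (∑ j, (x j - x' j)^2)
            ≤ K * Z / ε ^ 2 * Real.sqrt (∑ j, (x j - x' j)^2)
              + K * Z / ε ^ 2 * Real.sqrt (∑ j, (x j - x' j)^2) := by linarith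
          _ = 2*K*Z/ε^2 * Real.sqrt (∑ j, (x j - x' j)^2) := by ring

lemma l2_tri {ι : Type*} [Fintype ι] (u v w : ι → ℝ) :
    Real.sqrt (∑ i, (u i - w i) ^ 2) ≤
      Real.sqrt (∑ i, (u i - v i) ^ 2) + Real.sqrt (∑ i, (v i - w i) ^ 2) := by
  have h0 : 0 ≤ ∑ i, (u i - v i) ^ 2 := by positivity
  have h1 : 0 ≤ ∑ i, (v i - w i) ^ 2 := by positivity
  have hcs := l2_cs (fun i => u i - v i) (fun i => v i - w i)
  have key : ∑ i, (u i - w i) ^ 2 ≤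
      (Real.sqrt (∑ i, (u i - v i) ^ 2) + Real.sqrt (∑ i, (v i - w i) ^ 2)) ^ 2 := by
    have expand : ∑ i, (u i - w i) ^ 2 =
        (∑ i, (u i - v i) ^ 2) + 2 * (∑ i, (u i - v i) * (v i - w i)) + (∑ i, (v i - w i) ^ 2) := by
      rw [Finset.mul_sum, ← Finset.sum_add_distrib, ← Finset.sum_add_distrib]
      congr 1; ext i; ring
    rw [expand, add_sq, Real.sq_sqrt h0, Real.sq_sqrt h1]
    have := le_trans (le_abs_self _) hcs
    nlinarith [this]
  calc Real.sqrt (∑ i, (u i - w i) ^ 2) ≤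
      Real.sqrt ((Real.sqrt (∑ i, (u i - v i) ^ 2) + Real.sqrt (∑ i, (v i - w i) ^ 2)) ^ 2) :=
        Real.sqrt_le_sqrt key
    _ = _ := by rw [Real.sqrt_sq (by positivity)]


lemma l2_sum_sqrt {α : Type*} (s : Finset α) (h : α → ℝ) (hh : ∀ a, 0 ≤ h a) :
    ∑ a ∈ s, Real.sqrt (h a) ≤ Real.sqrt (s.card) * Real.sqrt (∑ a ∈ s, h a) := by
  have hcs := Finset.sum_mul_sq_le_sq_mul_sq s (fun _ => (1:ℝ)) (fun a => Real.sqrt (h a))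
  simp only [one_mul, one_pow, Finset.sum_const, nsmul_eq_mul, mul_one] at hcs
  have h2 : ∀ a ∈ s, Real.sqrt (h a) ^ 2 = h a := fun a _ => Real.sq_sqrt (hh a)
  rw [Finset.sum_congr rfl h2] at hcs
  have h3 : 0 ≤ ∑ a ∈ s, Real.sqrt (h a) := Finset.sum_nonneg fun a _ => Real.sqrt_nonneg _
  calc ∑ a ∈ s, Real.sqrt (h a) = Real.sqrt ((∑ a ∈ s, Real.sqrt (h a)) ^ 2) := by
        rw [Real.sqrt_sq h3]
    _ ≤ Real.sqrt ((s.card : ℝ) * ∑ a ∈ s, h a) := Real.sqrt_le_sqrt hcs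
    _ = _ := Real.sqrt_mul (by positivity) _


noncomputable def nQ {d : ℕ} {W : Type*} [Fintype W] (ψ : Fin d → ℝ)
    (z : W → Fin d → ℝ) (i : Fin d) : ℝ :=
  ψ i * (∏ w, z w i) / ∑ j, ψ j * (∏ w, z w j)

lemma bp_core {d : ℕ} (hd : 0 < d) {W : Type*} [Fintype W] [DecidableEq W]
    (ψ : Fin d → ℝ) (hψ : ∀ j, 0 < ψ j) (ε Z R : ℝ) (hε0 : 0 < ε) (hε1 : ε ≤ 1)
    (hZ : 0 < Z) (hR : ∀ j, ψ j / ∑ ℓ, ψ ℓ ≤ R)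
    (x x' : W → Fin d → ℝ)
    (hx : ∀ w j, ε/Z ≤ x w j ∧ x w j ≤ 1/Z) (hx' : ∀ w j, ε/Z ≤ x' w j ∧ x' w j ≤ 1/Z) :
    Real.sqrt (∑ i, (nQ ψ x i - nQ ψ x' i) ^ 2)
    ≤ (2*R*Z/ε^(Fintype.card W + 1)) * Real.sqrt (Fintype.card W) *
      Real.sqrt (∑ w, ∑ j, (x w j - x' w j)^2) := by
  haveI : Nonempty (Fin d) := ⟨⟨0, hd⟩⟩
  have hψsum : 0 < ∑ ℓ, ψ ℓ := Finset.sum_pos (fun j _ => hψ j) Finset.univ_nonempty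
  have hR0 : 0 < R := lt_of_lt_of_le (div_pos (hψ ⟨0, hd⟩) hψsum) (hR ⟨0, hd⟩)
  set n := Fintype.card W with hn
  set C : ℝ := 2*R*Z/ε^(n+1) with hC
  have hC0 : 0 ≤ C := by positivity
  set y : Finset W → W → Fin d → ℝ := fun s w => if w ∈ s then x' w else x w with hy
  have hybox : ∀ s w j, ε/Z ≤ y s w j ∧ y s w j ≤ 1/Z := by
    intro s w j
    by_cases h : w ∈ s
    · simp only [hy, if_pos h]; exact hx' w j
    · simp only [hy, if_neg h]; exact hx w j
  have hypos : ∀ s w j, 0 < y s w j :=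
    fun s w j => lt_of_lt_of_le (by positivity) (hybox s w j).1
  have main : ∀ s : Finset W,
      Real.sqrt (∑ i, (nQ ψ x i - nQ ψ (y s) i) ^ 2)
        ≤ C * ∑ w ∈ s, Real.sqrt (∑ j, (x w j - x' w j)^2) := by
    intro s
    induction s using Finset.induction_on with
    | empty =>
      have : y ∅ = x := by
        funext w j; simp [hy]
      rw [this]
      simp
    | @insert a s ha ih =>
      refine le_trans (l2_tri _ (nQ ψ (y s)) _) ?_
      have step2 : Real.sqrt (∑ i, (nQ ψ (y s) i - nQ ψ (y (insert a s)) i) ^ 2)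
          ≤ C * Real.sqrt (∑ j, (x a j - x' a j)^2) := by
        set c := (Finset.univ.erase a).card with hc
        have hcn : c + 1 = n := by
          rw [hc, Finset.card_erase_add_one (Finset.mem_univ a), Finset.card_univ, hn]
        set b : Fin d → ℝ := fun j => ψ j * ∏ w ∈ Finset.univ.erase a, y s w j with hb
        have hbpos : ∀ j, 0 < b j := by
          intro j
          exact mul_pos (hψ j) (Finset.prod_pos fun w _ => hypos s w j)
        -- rewrite the two nQ's
        have hrw1 : ∀ i, nQ ψ (y s) i = b i * x a i / (∑ j, b j * x a j) := by
          intro i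
          have key : ∀ k, ψ k * (∏ w, y s w k) = b k * x a k := by
            intro k
            have e1 : y s a k = x a k := by simp [hy, ha]
            have e4 : (∏ w, y s w k)
                = (∏ w ∈ Finset.univ.erase a, y s w k) * y s a k :=
              (Finset.prod_erase_mul Finset.univ (fun w => y s w k)
                (Finset.mem_univ a)).symm
            rw [e4, e1, hb]; ring
          rw [nQ, key i]
          congr 1
          exact Finset.sum_congr rfl fun k _ => key k
        have hrw2 : ∀ i, nQ ψ (y (insert a s)) i = b i * x' a i / (∑ j, b j * x' a j) := by
          intro i
          have key : ∀ k, ψ k * (∏ w, y (insert a s) w k) = b k * x' a k := by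
            intro k
            have e1 : y (insert a s) a k = x' a k := by simp [hy]
            have e2 : ∀ w, w ≠ a → y (insert a s) w k = y s w k := by
              intro w hw
              simp only [hy, Finset.mem_insert]
              by_cases h : w ∈ s
              · simp [h]
              · simp [h, hw]
            have e4 : (∏ w, y (insert a s) w k)
                = (∏ w ∈ Finset.univ.erase a, y (insert a s) w k) * y (insert a s) a k :=
              (Finset.prod_erase_mul Finset.univ (fun w => y (insert a s) w k)
                (Finset.mem_univ a)).symm
            have e3 : ∏ w ∈ Finset.univ.erase a, y (insert a s) w k
                = ∏ w ∈ Finset.univ.erase a, y s w k := by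
              refine Finset.prod_congr rfl fun w hw => ?_
              exact e2 w (Finset.ne_of_mem_erase hw)
            rw [e4, e1, e3, hb]; ring
          rw [nQ, key i]
          congr 1
          exact Finset.sum_congr rfl fun k _ => key k
        have hKb : ∀ i, b i ≤ (R/ε^c) * ∑ ℓ, b ℓ := by
          intro i
          have hub : ∏ w ∈ Finset.univ.erase a, y s w i ≤ (1/Z)^c := by
            rw [hc, ← Finset.prod_const]
            exact Finset.prod_le_prod (fun w _ => (hypos s w i).le)
              (fun w _ => (hybox s w i).2)
          have hlb : ∀ k, (ε/Z)^c ≤ ∏ w ∈ Finset.univ.erase a, y s w k := by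
            intro k
            rw [hc, ← Finset.prod_const]
            exact Finset.prod_le_prod (fun w _ => by positivity)
              (fun w _ => (hybox s w k).1)
          have hsb : (ε/Z)^c * ∑ ℓ, ψ ℓ ≤ ∑ ℓ, b ℓ := by
            rw [Finset.mul_sum]
            refine Finset.sum_le_sum fun k _ => ?_
            rw [hb, mul_comm ((ε/Z)^c)]
            exact mul_le_mul_of_nonneg_left (hlb k) (hψ k).le
          have hψR : ψ i ≤ R * ∑ ℓ, ψ ℓ := by
            rw [← div_le_iff₀ hψsum]; exact hR i
          calc b i ≤ ψ i * (1/Z)^c := by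
                rw [hb]
                exact mul_le_mul_of_nonneg_left hub (hψ i).le
            _ ≤ (R * ∑ ℓ, ψ ℓ) * (1/Z)^c :=
                mul_le_mul_of_nonneg_right hψR (by positivity)
            _ = (R/ε^c) * ((ε/Z)^c * ∑ ℓ, ψ ℓ) := by
                rw [div_pow]; field_simp; rw [one_pow, one_mul, div_pow, mul_div_assoc', mul_div_cancel_left₀ _ (pow_ne_zero _ hZ.ne')]
            _ ≤ (R/ε^c) * ∑ ℓ, b ℓ :=
                mul_le_mul_of_nonneg_left hsb (by positivity)
        have := bp_step hd b (x a) (x' a) hbpos ε Z (R/ε^c) hε0 hε1 hZ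
          (by positivity) hKb (hx a) (hx' a)
        have hcoef : C = 2*(R/ε^c)*Z/ε^2 := by
          rw [hC, ← hcn]
          field_simp
          ring
        rw [Finset.sum_congr rfl (fun i _ => by rw [hrw1 i, hrw2 i])]
        refine le_trans this (le_of_eq ?_)
        rw [hcoef]
      calc Real.sqrt (∑ i, (nQ ψ x i - nQ ψ (y s) i) ^ 2)
            + Real.sqrt (∑ i, (nQ ψ (y s) i - nQ ψ (y (insert a s)) i) ^ 2)
          ≤ C * (∑ w ∈ s, Real.sqrt (∑ j, (x w j - x' w j)^2))
            + C * Real.sqrt (∑ j, (x a j - x' a j)^2) := add_le_add ih step2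
        _ = C * ∑ w ∈ insert a s, Real.sqrt (∑ j, (x w j - x' w j)^2) := by
            rw [Finset.sum_insert ha]; ring
  have hfin := main Finset.univ
  have hyu : y Finset.univ = x' := by funext w j; simp [hy]
  rw [hyu] at hfin
  refine le_trans hfin ?_
  rw [mul_assoc]
  refine mul_le_mul_of_nonneg_left ?_ hC0
  have := l2_sum_sqrt Finset.univ (fun w => ∑ j, (x w j - x' w j)^2)
    (fun w => by positivity)
  simpa using this

end Aux2

section Aux
open Finset

/-- Sum over directed edges of a function vanishing off adjacency, grouped by tail. -/
lemma sum_dirEdge {V : Type*} [Fintype V] [DecidableEq V] (P : GM V) (f : V × V → ℝ)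
    (hf : ∀ p, ¬ P.G.Adj p.1 p.2 → f p = 0) :
    ∑ e : P.DirEdge, f e.1 = ∑ a : V, ∑ b ∈ P.G.neighborFinset a, f (a, b) := by
  classical
  have h1 : ∑ e : P.DirEdge, f e.1
      = ∑ p ∈ Finset.univ.filter (fun p : V × V => P.G.Adj p.1 p.2), f p := by
    rw [← Finset.sum_subtype (Finset.univ.filter (fun p : V × V => P.G.Adj p.1 p.2))
      (fun p => by simp) f]
  rw [h1, Finset.sum_filter, Fintype.sum_prod_type]
  refine Finset.sum_congr rfl fun a _ => ?_
  rw [SimpleGraph.neighborFinset_eq_filter, Finset.sum_filter]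

/-- reversal bijection on directed edges -/
lemma sum_dirEdge_rev {V : Type*} [Fintype V] [DecidableEq V] (P : GM V)
    (g : P.DirEdge → ℝ) :
    ∑ e : P.DirEdge, g e = ∑ e : P.DirEdge, g ⟨(e.1.2, e.1.1), e.2.symm⟩ := by
  have hinv : Function.Involutive
      (fun e : P.DirEdge => (⟨(e.1.2, e.1.1), e.2.symm⟩ : P.DirEdge)) := by
    intro e; rfl
  exact (Fintype.sum_bijective _ hinv.bijective _ _ (fun e => rfl)).symm

end Aux
set_option maxHeartbeats 1600000

/-- For the Potts model with parameter `ε ∈ (0,1)`, if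
`max_u { ((deg(u)−1)/ε^{deg(u)}) max_j ψ_u(j)/∑_ℓ ψ_u(ℓ) } < (1/(4(1−ε)(1+(d−1)ε)))^{1/2}`,
then the BP update `F` is a contraction on `B`: there is `L < 1` with
`‖F(m) − F(m′)‖₂ ≤ L ‖m − m′‖₂` for all `m, m′ ∈ B`. -/
theorem potts_bp_contraction
    {V : Type*} [Fintype V] [DecidableEq V] [Nonempty V] (P : GM V)
    (hd : 0 < P.d)
    (hψn : ∀ u j, 0 < P.ψn u j)
    (ε : ℝ) (hε0 : 0 < ε) (hε1 : ε < 1)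
    (hpotts : ∀ u v, P.G.Adj u v → ∀ i j, P.ψe u v i j = if i = j then 1 else ε)
    (hcond : (⨆ u : V, ((P.G.degree u : ℝ) - 1) / ε ^ P.G.degree u *
        ⨆ j : Fin P.d, P.ψn u j / ∑ ℓ, P.ψn u ℓ) <
      Real.sqrt (1 / (4 * (1 - ε) * (1 + ((P.d : ℝ) - 1) * ε)))) :
    ∃ L : ℝ, L < 1 ∧ ∀ m ∈ P.ball, ∀ m' ∈ P.ball,
      l2norm (P.bp m - P.bp m') ≤ L * l2norm (m - m') := by
    classical
  haveI : Nonempty (Fin P.d) := ⟨⟨0, hd⟩⟩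
  have hd1 : (1:ℝ) ≤ (P.d : ℝ) := by exact_mod_cast hd
  set Z : ℝ := 1 + ((P.d : ℝ) - 1) * ε with hZdef
  have hZ1 : (1:ℝ) ≤ Z := by nlinarith
  have hZ0 : (0:ℝ) < Z := lt_of_lt_of_le one_pos hZ1
  have hε1' : (0:ℝ) < 1 - ε := by linarith
  -- value of the potts row sums
  have hsum_ite : ∀ j : Fin P.d, ∑ i : Fin P.d, (if i = j then (1:ℝ) else ε) = Z := by
    intro j
    have e1 : ∀ i : Fin P.d, (if i = j then (1:ℝ) else ε)
        = ε + (if i = j then 1-ε else 0) := by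
      intro i; split_ifs <;> ring
    rw [Finset.sum_congr rfl fun i _ => e1 i, Finset.sum_add_distrib,
      Finset.sum_const, Finset.sum_ite_eq' Finset.univ j fun _ => (1:ℝ)-ε]
    simp only [Finset.card_univ, Fintype.card_fin, Finset.mem_univ, if_true,
      nsmul_eq_mul, hZdef]
    ring
  -- value of Gamma
  have hGam : ∀ (e : P.DirEdge) (i j : Fin P.d),
      P.Gam e i j = (if i = j then (1:ℝ) else ε) / Z := by
    intro e i j
    have hpe : P.ψe e.1.1 e.1.2 i j = if i = j then (1:ℝ) else ε := hpotts _ _ e.2 i j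
    have hbm : P.bmass e j = P.ψn e.1.1 j * Z := by
      rw [GM.bmass]
      congr 1
      rw [Finset.sum_congr rfl fun i _ => hpotts _ _ e.2 i j]
      exact hsum_ite j
    have h1 : P.ψn e.1.1 j ≠ 0 := (hψn _ _).ne'
    have h2 : Z ≠ 0 := hZ0.ne'
    rw [GM.Gam, hbm, hpe]
    field_simp
  have hdivZ : ε / Z ≤ 1 / Z := by
    have h := mul_le_mul_of_nonneg_right hε1.le (inv_nonneg.mpr hZ0.le)
    simpa [div_eq_mul_inv] using h
  -- messages in the ball are in the box [ε/Z, 1/Z]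
  have hball : ∀ m ∈ P.ball, ∀ (e : P.DirEdge) (i : Fin P.d),
      ε/Z ≤ m (e, i) ∧ m (e, i) ≤ 1/Z := by
    intro m hm e i
    obtain ⟨hsum, hbd⟩ := hm e
    obtain ⟨hlo, hhi⟩ := hbd i
    constructor
    · refine le_trans ?_ hlo
      rw [GM.beta0]
      refine le_ciInf fun j => ?_
      rw [hGam]
      split_ifs
      · exact hdivZ
      · exact le_refl _
    · refine le_trans hhi ?_
      rw [GM.mu0]
      refine ciSup_le fun j => ?_
      rw [hGam]
      split_ifs
      · exact le_refl _
      · exact hdivZ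
  -- the contraction constant
  set C : ℝ := ⨆ u : V, ((P.G.degree u : ℝ) - 1) / ε ^ P.G.degree u *
      ⨆ j : Fin P.d, P.ψn u j / ∑ ℓ, P.ψn u ℓ with hCdef
  set L : ℝ := max (2*(1-ε)*C) 0 with hLdef
  have hL0 : (0:ℝ) ≤ L := le_max_right _ _
  have hL1 : L < 1 := by
    rw [hLdef, max_lt_iff]
    refine ⟨?_, one_pos⟩
    have h2 : Real.sqrt (1 / (4 * (1 - ε) * Z)) ≤ 1/(2*(1-ε)) := by
      rw [show (1:ℝ)/(2*(1-ε)) = Real.sqrt ((1/(2*(1-ε)))^2) from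
        (Real.sqrt_sq (by positivity)).symm]
      apply Real.sqrt_le_sqrt
      rw [div_pow, one_pow, div_le_div_iff₀ (by positivity) (by positivity)]
      have hZZ : (1-ε) ≤ Z := by linarith
      nlinarith [mul_le_mul_of_nonneg_left hZZ hε1'.le]
    calc 2*(1-ε)*C < 2*(1-ε)*Real.sqrt (1 / (4 * (1 - ε) * Z)) := by
          apply mul_lt_mul_of_pos_left hcond (by linarith)
      _ ≤ 2*(1-ε)*(1/(2*(1-ε))) := mul_le_mul_of_nonneg_left h2 (by linarith)
      _ = 1 := by field_simp
  refine ⟨L, hL1, fun m hm m' hm' => ?_⟩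
  -- squared message difference per directed edge
  set g : P.DirEdge → ℝ := fun f => ∑ i, (m (f, i) - m' (f, i))^2 with hgdef
  have hg0 : ∀ f, 0 ≤ g f := fun f => Finset.sum_nonneg fun i _ => sq_nonneg _
  have hMpos : ∀ (mm : P.Msg), mm ∈ P.ball → ∀ (e : P.DirEdge) (j : Fin P.d),
      0 < P.Mprod mm e j := by
    intro mm hmm e j
    rw [GM.Mprod]
    refine Finset.prod_pos fun w _ => ?_
    exact lt_of_lt_of_le (by positivity) (hball mm hmm _ j).1
  have hTpos : ∀ (mm : P.Msg), mm ∈ P.ball → ∀ (e : P.DirEdge),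
      0 < ∑ j, P.ψn e.1.1 j * P.Mprod mm e j := by
    intro mm hmm e
    exact Finset.sum_pos (fun j _ => mul_pos (hψn _ _) (hMpos mm hmm e j))
      Finset.univ_nonempty
  -- the bp update in closed form
  have hbp : ∀ (mm : P.Msg), mm ∈ P.ball → ∀ (e : P.DirEdge) (i : Fin P.d),
      P.bp mm (e, i) = ((1-ε) * (P.ψn e.1.1 i * P.Mprod mm e i)
        + ε * ∑ j, P.ψn e.1.1 j * P.Mprod mm e j)
        / ((∑ j, P.ψn e.1.1 j * P.Mprod mm e j) * Z) := by
    intro mm hmm e i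
    have hnum : ∀ k : Fin P.d, ∑ j, P.ψe e.1.1 e.1.2 k j * P.ψn e.1.1 j * P.Mprod mm e j
        = (1-ε) * (P.ψn e.1.1 k * P.Mprod mm e k)
          + ε * ∑ j, P.ψn e.1.1 j * P.Mprod mm e j := by
      intro k
      have e1 : ∀ j, P.ψe e.1.1 e.1.2 k j * P.ψn e.1.1 j * P.Mprod mm e j
          = (if k = j then (1-ε) * (P.ψn e.1.1 j * P.Mprod mm e j) else 0)
            + ε * (P.ψn e.1.1 j * P.Mprod mm e j) := by
        intro j
        rw [hpotts _ _ e.2]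
        split_ifs <;> ring
      rw [Finset.sum_congr rfl fun j _ => e1 j, Finset.sum_add_distrib,
        Finset.sum_ite_eq Finset.univ k fun j => (1-ε) * (P.ψn e.1.1 j * P.Mprod mm e j),
        ← Finset.mul_sum]
      simp
    have hden : ∑ k, ∑ j, P.ψe e.1.1 e.1.2 k j * P.ψn e.1.1 j * P.Mprod mm e j
        = (∑ j, P.ψn e.1.1 j * P.Mprod mm e j) * Z := by
      rw [Finset.sum_congr rfl fun k _ => hnum k, Finset.sum_add_distrib,
        Finset.sum_const, ← Finset.mul_sum]
      simp only [Finset.card_univ, Fintype.card_fin, nsmul_eq_mul, hZdef]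
      ring
    show P.bp mm (e, i) = _
    rw [GM.bp]
    show (∑ j, P.ψe e.1.1 e.1.2 i j * P.ψn e.1.1 j * P.Mprod mm e j) /
        (∑ k, ∑ j, P.ψe e.1.1 e.1.2 k j * P.ψn e.1.1 j * P.Mprod mm e j) = _
    rw [hnum i, hden]
  -- per-edge contraction bound
  have key : ∀ e : P.DirEdge,
      ∑ i, (P.bp m (e, i) - P.bp m' (e, i))^2
        ≤ L^2 * (((((P.G.neighborFinset e.1.1).erase e.1.2).card : ℝ))⁻¹ *
            ∑ w ∈ ((P.G.neighborFinset e.1.1).erase e.1.2).attach, g (P.revEdge e w)) := by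
    intro e
    set S : Finset V := (P.G.neighborFinset e.1.1).erase e.1.2 with hS
    set x : {w // w ∈ S} → Fin P.d → ℝ := fun w j => m (P.revEdge e w, j) with hxdef
    set x' : {w // w ∈ S} → Fin P.d → ℝ := fun w j => m' (P.revEdge e w, j) with hx'def
    have hxbox : ∀ w j, ε/Z ≤ x w j ∧ x w j ≤ 1/Z := fun w j => hball m hm _ j
    have hx'box : ∀ w j, ε/Z ≤ x' w j ∧ x' w j ≤ 1/Z := fun w j => hball m' hm' _ j
    have hMprod : ∀ (mm : P.Msg) (j : Fin P.d),
        P.Mprod mm e j = ∏ w : {w // w ∈ S}, mm (P.revEdge e w, j) := by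
      intro mm j
      rw [GM.Mprod, ← Finset.univ_eq_attach]
    set R : ℝ := ⨆ j : Fin P.d, P.ψn e.1.1 j / ∑ ℓ, P.ψn e.1.1 ℓ with hRdef
    have hψsum : 0 < ∑ ℓ, P.ψn e.1.1 ℓ :=
      Finset.sum_pos (fun j _ => hψn e.1.1 j) Finset.univ_nonempty
    have hRle : ∀ j, P.ψn e.1.1 j / ∑ ℓ, P.ψn e.1.1 ℓ ≤ R := by
      intro j
      rw [hRdef]
      exact le_ciSup (Set.Finite.bddAbove (Set.finite_range
        (fun j : Fin P.d => P.ψn e.1.1 j / ∑ ℓ, P.ψn e.1.1 ℓ))) j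
    have hR0 : 0 < R :=
      lt_of_lt_of_le (div_pos (hψn e.1.1 ⟨0,hd⟩) hψsum) (hRle ⟨0,hd⟩)
    have hnQ : ∀ (mm : P.Msg) (xx : {w // w ∈ S} → Fin P.d → ℝ),
        (∀ w j, xx w j = mm (P.revEdge e w, j)) → ∀ i,
        nQ (P.ψn e.1.1) xx i
          = P.ψn e.1.1 i * P.Mprod mm e i / ∑ j, P.ψn e.1.1 j * P.Mprod mm e j := by
      intro mm xx hxx i
      simp only [nQ]
      have hprod : ∀ j, (∏ w, xx w j) = P.Mprod mm e j := by
        intro j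
        rw [hMprod mm j]
        exact Finset.prod_congr rfl fun w _ => hxx w j
      rw [hprod i, Finset.sum_congr rfl fun j _ => by rw [hprod j]]
    have hTm := hTpos m hm e
    have hTm' := hTpos m' hm' e
    have hbpdiff : ∀ i, P.bp m (e, i) - P.bp m' (e, i)
        = ((1-ε)/Z) * (nQ (P.ψn e.1.1) x i - nQ (P.ψn e.1.1) x' i) := by
      intro i
      rw [hbp m hm e i, hbp m' hm' e i,
        hnQ m x (fun w j => rfl) i, hnQ m' x' (fun w j => rfl) i]
      field_simp
      ring
    have hsq : ∑ i, (P.bp m (e, i) - P.bp m' (e, i))^2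
        = ((1-ε)/Z)^2 * ∑ i, (nQ (P.ψn e.1.1) x i - nQ (P.ψn e.1.1) x' i)^2 := by
      rw [Finset.mul_sum]
      exact Finset.sum_congr rfl fun i _ => by rw [hbpdiff i]; ring
    have hcore := bp_core hd (P.ψn e.1.1) (fun j => hψn e.1.1 j) ε Z R hε0 hε1.le hZ0 hRle
      x x' hxbox hx'box
    rw [Fintype.card_coe] at hcore
    set B : ℝ := ∑ w : {w // w ∈ S}, ∑ j, (x w j - x' w j)^2 with hBdef
    have hB0 : 0 ≤ B :=
      Finset.sum_nonneg fun w _ => Finset.sum_nonneg fun j _ => sq_nonneg _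
    have hBattach : B = ∑ w ∈ S.attach, g (P.revEdge e w) := by
      rw [hBdef, Finset.univ_eq_attach]
    have hnQ0 : 0 ≤ ∑ i, (nQ (P.ψn e.1.1) x i - nQ (P.ψn e.1.1) x' i)^2 :=
      Finset.sum_nonneg fun i _ => sq_nonneg _
    have hcoresq : ∑ i, (nQ (P.ψn e.1.1) x i - nQ (P.ψn e.1.1) x' i)^2
        ≤ (2*R*Z/ε^(S.card + 1))^2 * (S.card : ℝ) * B := by
      calc ∑ i, (nQ (P.ψn e.1.1) x i - nQ (P.ψn e.1.1) x' i)^2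
          = Real.sqrt (∑ i, (nQ (P.ψn e.1.1) x i - nQ (P.ψn e.1.1) x' i)^2) ^ 2 :=
            (Real.sq_sqrt hnQ0).symm
        _ ≤ ((2*R*Z/ε^(S.card + 1)) * Real.sqrt (S.card) * Real.sqrt B) ^ 2 := by
            apply pow_le_pow_left₀ (Real.sqrt_nonneg _) hcore
        _ = (2*R*Z/ε^(S.card + 1))^2 * (S.card : ℝ) * B := by
            rw [mul_pow, mul_pow, Real.sq_sqrt (by positivity : (0:ℝ) ≤ (S.card:ℝ)),
              Real.sq_sqrt hB0]
    have hvmem : e.1.2 ∈ P.G.neighborFinset e.1.1 :=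
      (SimpleGraph.mem_neighborFinset _ _ _).mpr e.2
    have hdeg : S.card + 1 = P.G.degree e.1.1 := by
      rw [hS]
      exact Finset.card_erase_add_one hvmem
    clear_value B x x'
    clear hxdef hx'def hBdef
    rw [hsq, ← hBattach]
    by_cases hn0 : S.card = 0
    · have hSempty : S = ∅ := Finset.card_eq_zero.mp hn0
      have hBz : B = 0 := by
        rw [hBattach]
        refine Finset.sum_eq_zero fun w hw => ?_
        have hpos := Finset.card_pos.mpr ⟨w.1, w.2⟩
        omega
      have h2 : ∑ i, (nQ (P.ψn e.1.1) x i - nQ (P.ψn e.1.1) x' i)^2 ≤ 0 := by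
        simpa [hBz] using hcoresq
      have h3 : ∑ i, (nQ (P.ψn e.1.1) x i - nQ (P.ψn e.1.1) x' i)^2 = 0 :=
        le_antisymm h2 hnQ0
      rw [h3, hBz]
      simp
    · have hnR : (0:ℝ) < (S.card : ℝ) := by exact_mod_cast Nat.pos_of_ne_zero hn0
      set κ : ℝ := 2*(1-ε)*(((S.card : ℝ))/ε^(S.card+1)*R) with hκdef
      have hκ0 : 0 ≤ κ := by
        rw [hκdef]
        positivity
      have hκL : κ ≤ L := by
        have h4 : ((P.G.degree e.1.1 : ℝ) - 1) / ε ^ P.G.degree e.1.1 *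
            (⨆ j : Fin P.d, P.ψn e.1.1 j / ∑ ℓ, P.ψn e.1.1 ℓ) ≤ C := by
          rw [hCdef]
          exact le_ciSup (Set.Finite.bddAbove (Set.finite_range
            (fun u : V => ((P.G.degree u : ℝ) - 1) / ε ^ P.G.degree u *
              ⨆ j : Fin P.d, P.ψn u j / ∑ ℓ, P.ψn u ℓ))) e.1.1
        have h5 : ((P.G.degree e.1.1 : ℝ) - 1) / ε ^ P.G.degree e.1.1 *
            (⨆ j : Fin P.d, P.ψn e.1.1 j / ∑ ℓ, P.ψn e.1.1 ℓ)
            = ((S.card : ℝ))/ε^(S.card+1)*R := by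
          rw [← hRdef, ← hdeg]
          push_cast
          ring
        rw [h5] at h4
        calc κ = 2*(1-ε)*(((S.card : ℝ))/ε^(S.card+1)*R) := hκdef
          _ ≤ 2*(1-ε)*C := by
              apply mul_le_mul_of_nonneg_left h4 (by linarith)
          _ ≤ L := le_max_left _ _
      clear_value κ
      calc ((1-ε)/Z)^2 * ∑ i, (nQ (P.ψn e.1.1) x i - nQ (P.ψn e.1.1) x' i)^2
          ≤ ((1-ε)/Z)^2 * ((2*R*Z/ε^(S.card + 1))^2 * (S.card : ℝ) * B) :=
            mul_le_mul_of_nonneg_left hcoresq (by positivity)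
        _ = (κ^2 * ((S.card : ℝ))⁻¹) * B := by
            rw [hκdef]
            field_simp
        _ ≤ (L^2 * ((S.card : ℝ))⁻¹) * B := by
            refine mul_le_mul_of_nonneg_right
              (mul_le_mul_of_nonneg_right (pow_le_pow_left₀ hκ0 hκL 2)
                (by positivity)) hB0
        _ = L^2 * (((S.card : ℝ))⁻¹ * B) := by ring
  -- double counting
  set G2 : V → V → ℝ := fun a b => if h : P.G.Adj a b then g ⟨(a,b),h⟩ else 0 with hG2def
  have hG20 : ∀ a b, 0 ≤ G2 a b := by
    intro a b
    rw [hG2def]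
    dsimp only
    split_ifs
    · exact hg0 _
    · exact le_refl 0
  have hattach : ∀ e : P.DirEdge,
      ∑ w ∈ ((P.G.neighborFinset e.1.1).erase e.1.2).attach, g (P.revEdge e w)
        = ∑ w ∈ (P.G.neighborFinset e.1.1).erase e.1.2, G2 w e.1.1 := by
    intro e
    rw [← Finset.sum_attach ((P.G.neighborFinset e.1.1).erase e.1.2)
      (fun w => G2 w e.1.1)]
    refine Finset.sum_congr rfl fun w _ => ?_
    have hadj : P.G.Adj w.1 e.1.1 := (P.revEdge e w).2
    rw [hG2def]
    dsimp only
    rw [dif_pos hadj]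
    rfl
  have hdc : ∑ e : P.DirEdge,
      (((((P.G.neighborFinset e.1.1).erase e.1.2).card : ℝ))⁻¹ *
        ∑ w ∈ ((P.G.neighborFinset e.1.1).erase e.1.2).attach, g (P.revEdge e w))
      ≤ ∑ f : P.DirEdge, g f := by
    have hL1' : ∑ e : P.DirEdge,
        (((((P.G.neighborFinset e.1.1).erase e.1.2).card : ℝ))⁻¹ *
          ∑ w ∈ ((P.G.neighborFinset e.1.1).erase e.1.2).attach, g (P.revEdge e w))
        = ∑ a : V, ∑ b ∈ P.G.neighborFinset a,
            ((((P.G.neighborFinset a).erase b).card : ℝ))⁻¹ *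
              ∑ w ∈ (P.G.neighborFinset a).erase b, G2 w a := by
      calc ∑ e : P.DirEdge,
          (((((P.G.neighborFinset e.1.1).erase e.1.2).card : ℝ))⁻¹ *
            ∑ w ∈ ((P.G.neighborFinset e.1.1).erase e.1.2).attach, g (P.revEdge e w))
          = ∑ e : P.DirEdge, (fun p : V × V => if h : P.G.Adj p.1 p.2 then
              ((((P.G.neighborFinset p.1).erase p.2).card : ℝ))⁻¹ *
                ∑ w ∈ (P.G.neighborFinset p.1).erase p.2, G2 w p.1 else 0) e.1 := by
            refine Finset.sum_congr rfl fun e _ => ?_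
            dsimp only
            rw [dif_pos e.2, hattach e]
        _ = ∑ a : V, ∑ b ∈ P.G.neighborFinset a, (fun p : V × V => if h : P.G.Adj p.1 p.2 then
              ((((P.G.neighborFinset p.1).erase p.2).card : ℝ))⁻¹ *
                ∑ w ∈ (P.G.neighborFinset p.1).erase p.2, G2 w p.1 else 0) (a, b) :=
            sum_dirEdge P (fun p : V × V => if h : P.G.Adj p.1 p.2 then
              ((((P.G.neighborFinset p.1).erase p.2).card : ℝ))⁻¹ *
                ∑ w ∈ (P.G.neighborFinset p.1).erase p.2, G2 w p.1 else 0)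
              (fun p hp => dif_neg hp)
        _ = ∑ a : V, ∑ b ∈ P.G.neighborFinset a,
            ((((P.G.neighborFinset a).erase b).card : ℝ))⁻¹ *
              ∑ w ∈ (P.G.neighborFinset a).erase b, G2 w a := by
            refine Finset.sum_congr rfl fun a _ => Finset.sum_congr rfl fun b hb => ?_
            dsimp only
            rw [dif_pos ((SimpleGraph.mem_neighborFinset _ _ _).mp hb)]
    have hR1 : ∑ f : P.DirEdge, g f = ∑ a : V, ∑ b ∈ P.G.neighborFinset a, G2 b a := by
      calc ∑ f : P.DirEdge, g f
          = ∑ e : P.DirEdge, g ⟨(e.1.2, e.1.1), e.2.symm⟩ := sum_dirEdge_rev P g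
        _ = ∑ e : P.DirEdge, (fun p : V × V => if h : P.G.Adj p.1 p.2 then
              g ⟨(p.2, p.1), h.symm⟩ else 0) e.1 := by
            refine Finset.sum_congr rfl fun e _ => ?_
            dsimp only
            rw [dif_pos e.2]
        _ = ∑ a : V, ∑ b ∈ P.G.neighborFinset a, (fun p : V × V => if h : P.G.Adj p.1 p.2 then
              g ⟨(p.2, p.1), h.symm⟩ else 0) (a, b) :=
            sum_dirEdge P (fun p : V × V => if h : P.G.Adj p.1 p.2 then
              g ⟨(p.2, p.1), h.symm⟩ else 0) (fun p hp => dif_neg hp)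
        _ = ∑ a : V, ∑ b ∈ P.G.neighborFinset a, G2 b a := by
            refine Finset.sum_congr rfl fun a _ => Finset.sum_congr rfl fun b hb => ?_
            have hab : P.G.Adj a b := (SimpleGraph.mem_neighborFinset _ _ _).mp hb
            dsimp only
            rw [dif_pos hab, hG2def]
            dsimp only
            rw [dif_pos hab.symm]
    rw [hL1', hR1]
    refine Finset.sum_le_sum fun a _ => ?_
    set s : Finset V := P.G.neighborFinset a with hs
    have hT0 : 0 ≤ ∑ w ∈ s, G2 w a := Finset.sum_nonneg fun w _ => hG20 w a
    by_cases hc1 : s.card ≤ 1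
    · have hz : ∀ b ∈ s, (((s.erase b).card : ℝ))⁻¹ * ∑ w ∈ s.erase b, G2 w a = 0 := by
        intro b hb
        have : (s.erase b).card = 0 := by
          rw [Finset.card_erase_of_mem hb]
          omega
        rw [this]
        simp
      rw [Finset.sum_congr rfl hz]
      simpa using hT0
    · push_neg at hc1
      have hc2 : 2 ≤ s.card := hc1
      have hcast : ((s.card - 1 : ℕ) : ℝ) = (s.card : ℝ) - 1 := by
        have h1c : 1 ≤ s.card := by omega
        have hcc : ((s.card - 1 : ℕ) : ℝ) = (s.card : ℝ) - ((1:ℕ):ℝ) :=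
          Nat.cast_sub h1c
        simpa using hcc
      have hne : ((s.card : ℝ) - 1) ≠ 0 := by
        have : (2:ℝ) ≤ (s.card : ℝ) := by exact_mod_cast hc2
        nlinarith
      have heq : ∀ b ∈ s, (((s.erase b).card : ℝ))⁻¹ * ∑ w ∈ s.erase b, G2 w a
          = ((s.card : ℝ) - 1)⁻¹ * ((∑ w ∈ s, G2 w a) - G2 b a) := by
        intro b hb
        rw [Finset.card_erase_of_mem hb, hcast, Finset.sum_erase_eq_sub hb]
      rw [Finset.sum_congr rfl heq, ← Finset.mul_sum, Finset.sum_sub_distrib,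
        Finset.sum_const, nsmul_eq_mul]
      refine le_of_eq ?_
      field_simp
  -- assembling
  have hsumall : ∑ p : P.DirEdge × Fin P.d, ((P.bp m - P.bp m') p)^2
      ≤ L^2 * ∑ p : P.DirEdge × Fin P.d, ((m - m') p)^2 := by
    rw [Fintype.sum_prod_type, Fintype.sum_prod_type]
    have e1 : ∀ e : P.DirEdge, ∑ i, ((P.bp m - P.bp m') (e, i))^2
        = ∑ i, (P.bp m (e, i) - P.bp m' (e, i))^2 := by
      intro e
      exact Finset.sum_congr rfl fun i _ => by rw [Pi.sub_apply]
    have e2 : ∀ f : P.DirEdge, ∑ i, ((m - m') (f, i))^2 = g f := by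
      intro f
      exact Finset.sum_congr rfl fun i _ => by rw [Pi.sub_apply]
    rw [Finset.sum_congr rfl fun e _ => e1 e, Finset.sum_congr rfl fun f _ => e2 f]
    calc ∑ e : P.DirEdge, ∑ i, (P.bp m (e, i) - P.bp m' (e, i))^2
        ≤ ∑ e : P.DirEdge, L^2 *
            (((((P.G.neighborFinset e.1.1).erase e.1.2).card : ℝ))⁻¹ *
              ∑ w ∈ ((P.G.neighborFinset e.1.1).erase e.1.2).attach, g (P.revEdge e w)) :=
          Finset.sum_le_sum fun e _ => key e
      _ = L^2 * ∑ e : P.DirEdge,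
            (((((P.G.neighborFinset e.1.1).erase e.1.2).card : ℝ))⁻¹ *
              ∑ w ∈ ((P.G.neighborFinset e.1.1).erase e.1.2).attach, g (P.revEdge e w)) := by
          rw [Finset.mul_sum]
      _ ≤ L^2 * ∑ f : P.DirEdge, g f :=
          mul_le_mul_of_nonneg_left hdc (by positivity)
  -- final norm computation
  show Real.sqrt (∑ p, ((P.bp m - P.bp m') p)^2) ≤ L * Real.sqrt (∑ p, ((m - m') p)^2)
  calc Real.sqrt (∑ p, ((P.bp m - P.bp m') p)^2)
      ≤ Real.sqrt (L^2 * ∑ p, ((m - m') p)^2) := Real.sqrt_le_sqrt hsumall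
    _ = L * Real.sqrt (∑ p, ((m - m') p)^2) := by
        rw [Real.sqrt_mul (sq_nonneg L), Real.sqrt_sq hL0]
end

section
/- Let λ > 0, 1 < λ̃ < 2, c ≥ 0, and let (x_t)_{t≥0} be a sequence of nonnegative real numbers satisfying the recursion x_{t+1} ≤ c·α_t² + (1 − λα_t)·x_t for all t ≥ 0, where α_t = λ̃/(λ(t+2)). Then for all T ≥ 0, x_{T+1} ≤ (3/2)^{λ̃} · (c λ̃²/(λ²(λ̃ − 1))) · (T+2)^{λ̃−1}/(T+3)^{λ̃} + (2/(T+3))^{λ̃} · x_0. -/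
open Real

/-- Bernoulli-type: for `1 ≤ p`, `0 < b`, `1 - p/(b+1) ≤ (b/(b+1))^p`. -/
lemma aux_bern {p b : ℝ} (hp : 1 ≤ p) (hb : 0 < b) :
    1 - p / (b + 1) ≤ (b / (b + 1)) ^ p := by
  have hb1 : (0:ℝ) < b + 1 := by linarith
  have hs : (-1 : ℝ) ≤ -(1 / (b + 1)) := by
    rw [neg_le_neg_iff, div_le_one hb1]; linarith
  have h := one_add_mul_self_le_rpow_one_add hs hp
  have h1 : (1 : ℝ) + -(1 / (b + 1)) = b / (b + 1) := by field_simp; ring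
  have h2 : (1 : ℝ) + p * -(1 / (b + 1)) = 1 - p / (b + 1) := by ring
  rw [h1, h2] at h
  exact h

/-- Concavity: for `0 ≤ q ≤ 1`, `0 < a`: `(a+1)^q - a^q ≥ q * (a+1)^(q-1)`. -/
lemma aux_concave {q a : ℝ} (hq0 : 0 ≤ q) (hq1 : q ≤ 1) (ha : 0 < a) :
    q * (a + 1) ^ (q - 1) ≤ (a + 1) ^ q - a ^ q := by
  have ha1 : (0:ℝ) < a + 1 := by linarith
  have hfrac : (0:ℝ) ≤ a / (a + 1) := le_of_lt (div_pos ha ha1)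
  have hs : (-1 : ℝ) ≤ a / (a + 1) - 1 := by linarith
  have h := rpow_one_add_le_one_add_mul_self hs hq0 hq1
  have h1 : (1 : ℝ) + (a / (a + 1) - 1) = a / (a + 1) := by ring
  rw [h1] at h
  have h2 : a / (a + 1) - 1 = -(1/(a+1)) := by field_simp; ring
  rw [h2] at h
  rw [Real.div_rpow ha.le ha1.le] at h
  have hpow : (0:ℝ) < (a + 1) ^ q := Real.rpow_pos_of_pos ha1 q
  rw [div_le_iff₀ hpow] at h
  have h5 : (a + 1) ^ q / (a + 1) = (a + 1) ^ (q - 1) := by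
    rw [Real.rpow_sub ha1, Real.rpow_one]
  have h4 : (1 + q * -(1/(a+1))) * (a + 1) ^ q
      = (a + 1) ^ q - q * ((a + 1) ^ q / (a + 1)) := by ring
  rw [h4, h5] at h
  linarith

/-- deterministic recursion lemma. If `x_{t+1} ≤ c α_t² + (1 − λα_t) x_t` with
`α_t = λ̃/(λ(t+2))`, `λ > 0`, `1 < λ̃ < 2`, `c ≥ 0`, then
`x_{T+1} ≤ (3/2)^λ̃ (cλ̃²/(λ²(λ̃−1))) (T+2)^{λ̃−1}/(T+3)^λ̃ + (2/(T+3))^λ̃ x_0`. -/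
theorem recursion_bound_fast_stepsize
    (lam lamt c : ℝ) (hlam : 0 < lam) (hlamt1 : 1 < lamt) (hlamt2 : lamt < 2)
    (hc : 0 ≤ c) (x : ℕ → ℝ) (hx : ∀ t, 0 ≤ x t)
    (hrec : ∀ t : ℕ, x (t + 1) ≤
      c * (lamt / (lam * ((t : ℝ) + 2))) ^ 2 +
        (1 - lam * (lamt / (lam * ((t : ℝ) + 2)))) * x t) :
    ∀ T : ℕ, x (T + 1) ≤
      ((3 : ℝ) / 2) ^ lamt * (c * lamt ^ 2 / (lam ^ 2 * (lamt - 1))) *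
          (((T : ℝ) + 2) ^ (lamt - 1) / ((T : ℝ) + 3) ^ lamt)
        + ((2 : ℝ) / ((T : ℝ) + 3)) ^ lamt * x 0 := by
  have hp1 : (1:ℝ) < lamt := hlamt1
  set K := c * lamt ^ 2 / lam ^ 2 with hK
  have hK0 : 0 ≤ K := by positivity
  have hlamne : lam ≠ 0 := hlam.ne'
  have hrec' : ∀ t : ℕ, x (t + 1) ≤
      K / ((t : ℝ) + 2) ^ 2 + (1 - lamt / ((t : ℝ) + 2)) * x t := by
    intro t
    have ht2 : ((t : ℝ) + 2) ≠ 0 := by positivity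
    have e1 : c * (lamt / (lam * ((t : ℝ) + 2))) ^ 2 = K / ((t : ℝ) + 2) ^ 2 := by
      rw [hK]; field_simp
    have e2 : lam * (lamt / (lam * ((t : ℝ) + 2))) = lamt / ((t : ℝ) + 2) := by
      field_simp
    have h := hrec t
    rw [e1, e2] at h
    exact h
  set C := c * lamt ^ 2 / (lam ^ 2 * (lamt - 1)) with hC
  have hCK : C * (lamt - 1) = K := by
    rw [hC, hK]
    have : lamt - 1 ≠ 0 := by linarith
    field_simp
  have hC0 : 0 ≤ C := by
    rw [hC]
    have : (0:ℝ) < lamt - 1 := by linarith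
    positivity
  intro T
  induction T with
  | zero =>
    have h := hrec' 0
    norm_num at h
    have e1 : ((3:ℝ)/2) ^ lamt * C * ((2:ℝ) ^ (lamt-1) / (3:ℝ) ^ lamt) = C / 2 := by
      rw [Real.div_rpow (by norm_num : (0:ℝ) ≤ 3) (by norm_num : (0:ℝ) ≤ 2),
        Real.rpow_sub (by norm_num : (0:ℝ) < 2), Real.rpow_one]
      have h3 : ((3:ℝ)) ^ lamt ≠ 0 := (Real.rpow_pos_of_pos (by norm_num) lamt).ne'
      have h2 : ((2:ℝ)) ^ lamt ≠ 0 := (Real.rpow_pos_of_pos (by norm_num) lamt).ne'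
      field_simp
    have hb : 1 - lamt / 2 ≤ ((2:ℝ)/3) ^ lamt := by
      have hbb := aux_bern (p := lamt) (b := 2) hlamt1.le (by norm_num)
      norm_num at hbb
      have : 1 - lamt/2 ≤ 1 - lamt/3 := by nlinarith
      linarith
    have hK4 : K / 4 ≤ C / 2 := by
      rw [← hCK]
      nlinarith
    have hx0 : (1 - lamt / 2) * x 0 ≤ ((2:ℝ)/3) ^ lamt * x 0 :=
      mul_le_mul_of_nonneg_right hb (hx 0)
    have hgoal : x 1 ≤ C / 2 + ((2:ℝ)/3) ^ lamt * x 0 := by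
      calc x 1 ≤ K / 4 + (1 - lamt / 2) * x 0 := by
            have e : ((0:ℕ):ℝ) + 2 = 2 := by norm_num
            calc x 1 ≤ K / ((0:ℝ) + 2)^2 + (1 - lamt/((0:ℝ)+2)) * x 0 := by
                  simpa using hrec' 0
              _ = K / 4 + (1 - lamt / 2) * x 0 := by norm_num
        _ ≤ C / 2 + ((2:ℝ)/3) ^ lamt * x 0 := by linarith
    simpa [e1] using hgoal
  | succ n ih =>
    have hn3 : (0:ℝ) < (n:ℝ) + 3 := by positivity
    have hn4 : (0:ℝ) < (n:ℝ) + 4 := by positivity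
    have hn2 : (0:ℝ) < (n:ℝ) + 2 := by positivity
    -- recursion at t = n+1
    have h := hrec' (n + 1)
    have ecast : ((n + 1 : ℕ) : ℝ) + 2 = (n:ℝ) + 3 := by push_cast; ring
    rw [ecast] at h
    -- q := 1 - lamt/(n+3) nonneg and ≤ r := ((n+3)/(n+4))^lamt
    have hq0 : 0 ≤ 1 - lamt / ((n:ℝ) + 3) := by
      rw [sub_nonneg, div_le_one hn3]; linarith
    set r := (((n:ℝ) + 3) / ((n:ℝ) + 4)) ^ lamt with hr
    have hqr : 1 - lamt / ((n:ℝ) + 3) ≤ r := by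
      have hbb := aux_bern (p := lamt) (b := (n:ℝ) + 3) hlamt1.le hn3
      have e : (n:ℝ) + 3 + 1 = (n:ℝ) + 4 := by ring
      rw [e] at hbb
      have : 1 - lamt / ((n:ℝ)+3) ≤ 1 - lamt / ((n:ℝ)+4) := by
        have h1 : lamt / ((n:ℝ)+4) ≤ lamt / ((n:ℝ)+3) := by
          apply div_le_div_of_nonneg_left (by linarith) hn3 (by linarith)
        linarith
      linarith
    -- the IH bound is nonneg
    set A := ((3:ℝ)/2) ^ lamt * C * (((n:ℝ)+2) ^ (lamt-1) / ((n:ℝ)+3) ^ lamt) with hA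
    set B := ((2:ℝ)/((n:ℝ)+3)) ^ lamt with hB
    have hA0 : 0 ≤ A := by
      rw [hA]
      have := Real.rpow_nonneg (by norm_num : (0:ℝ) ≤ 3/2) lamt
      positivity
    have hB0 : 0 ≤ B := by
      rw [hB]; positivity
    have hAB : 0 ≤ A + B * x 0 := by
      have := mul_nonneg hB0 (hx 0)
      linarith
    have hr0 : 0 ≤ r := Real.rpow_nonneg (by positivity) lamt
    have step1 : x (n + 1 + 1) ≤ K / ((n:ℝ) + 3) ^ 2 + r * (A + B * x 0) := by
      calc x (n + 1 + 1) ≤ K / ((n:ℝ)+3)^2 + (1 - lamt/((n:ℝ)+3)) * x (n+1) := h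
        _ ≤ K / ((n:ℝ)+3)^2 + (1 - lamt/((n:ℝ)+3)) * (A + B * x 0) := by
            have := mul_le_mul_of_nonneg_left ih hq0
            linarith
        _ ≤ K / ((n:ℝ)+3)^2 + r * (A + B * x 0) := by
            have := mul_le_mul_of_nonneg_right hqr hAB
            linarith
    -- r * B = (2/(n+4))^lamt
    have hrB : r * B = ((2:ℝ)/((n:ℝ)+4)) ^ lamt := by
      rw [hr, hB, ← Real.mul_rpow (by positivity) (by positivity)]
      congr 1
      field_simp
    -- r * A = (3/2)^lamt * C * ((n+2)^(lamt-1) / (n+4)^lamt)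
    have hrA : r * A = ((3:ℝ)/2) ^ lamt * C * (((n:ℝ)+2) ^ (lamt-1) / ((n:ℝ)+4) ^ lamt) := by
      rw [hr, hA, Real.div_rpow hn3.le hn4.le]
      have h3 : ((n:ℝ)+3) ^ lamt ≠ 0 := (Real.rpow_pos_of_pos hn3 lamt).ne'
      have h4 : ((n:ℝ)+4) ^ lamt ≠ 0 := (Real.rpow_pos_of_pos hn4 lamt).ne'
      field_simp
    -- key: K/(n+3)^2 + (3/2)^p C (n+2)^{p-1}/(n+4)^p ≤ (3/2)^p C (n+3)^{p-1}/(n+4)^p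
    have hkey : K / ((n:ℝ)+3)^2 + ((3:ℝ)/2) ^ lamt * C * (((n:ℝ)+2) ^ (lamt-1) / ((n:ℝ)+4) ^ lamt)
        ≤ ((3:ℝ)/2) ^ lamt * C * (((n:ℝ)+3) ^ (lamt-1) / ((n:ℝ)+4) ^ lamt) := by
      have hconc := aux_concave (q := lamt - 1) (a := (n:ℝ) + 2)
        (by linarith) (by linarith) hn2
      have e : (n:ℝ) + 2 + 1 = (n:ℝ) + 3 := by ring
      rw [e] at hconc
      -- hconc : (lamt-1) * (n+3)^(lamt-2) ≤ (n+3)^(lamt-1) - (n+2)^(lamt-1)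
      have e2 : lamt - 1 - 1 = lamt - 2 := by ring
      rw [e2] at hconc
      -- (n+4)^lamt ≤ (3/2)^lamt * (n+3)^lamt
      have h34 : ((n:ℝ)+4) ^ lamt ≤ ((3:ℝ)/2) ^ lamt * ((n:ℝ)+3) ^ lamt := by
        rw [← Real.mul_rpow (by norm_num) hn3.le]
        apply Real.rpow_le_rpow hn4.le (by linarith) (by linarith)
      -- (n+3)^lamt = (n+3)^(lamt-2) * (n+3)^2
      have hsplit : ((n:ℝ)+3) ^ lamt = ((n:ℝ)+3) ^ (lamt - 2) * ((n:ℝ)+3) ^ 2 := by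
        rw [← Real.rpow_natCast ((n:ℝ)+3) 2, ← Real.rpow_add hn3]
        norm_num
      -- so K/(n+3)^2 ≤ (3/2)^lamt * K * (n+3)^(lamt-2) / (n+4)^lamt
      have hpow4 : (0:ℝ) < ((n:ℝ)+4) ^ lamt := Real.rpow_pos_of_pos hn4 lamt
      have hpow32 : (0:ℝ) < ((3:ℝ)/2) ^ lamt := Real.rpow_pos_of_pos (by norm_num) lamt
      have hpown2 : (0:ℝ) < ((n:ℝ)+3) ^ (lamt - 2) := Real.rpow_pos_of_pos hn3 _
      have hfirst : K / ((n:ℝ)+3)^2 ≤ ((3:ℝ)/2) ^ lamt * K * ((n:ℝ)+3) ^ (lamt-2) / ((n:ℝ)+4) ^ lamt := by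
        rw [div_le_div_iff₀ (by positivity) hpow4]
        calc K * ((n:ℝ)+4) ^ lamt ≤ K * (((3:ℝ)/2) ^ lamt * ((n:ℝ)+3) ^ lamt) :=
              mul_le_mul_of_nonneg_left h34 hK0
          _ = ((3:ℝ)/2) ^ lamt * K * ((n:ℝ)+3) ^ (lamt-2) * ((n:ℝ)+3)^2 := by
              rw [hsplit]; ring
      -- combine with hconc
      have hmul : ((3:ℝ)/2) ^ lamt * C * ((lamt - 1) * ((n:ℝ)+3) ^ (lamt-2))
          ≤ ((3:ℝ)/2) ^ lamt * C * (((n:ℝ)+3) ^ (lamt-1) - ((n:ℝ)+2) ^ (lamt-1)) := by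
        apply mul_le_mul_of_nonneg_left hconc (by positivity)
      have hCK' : ((3:ℝ)/2) ^ lamt * C * ((lamt - 1) * ((n:ℝ)+3) ^ (lamt-2))
          = ((3:ℝ)/2) ^ lamt * K * ((n:ℝ)+3) ^ (lamt-2) := by
        rw [← hCK]; ring
      rw [hCK'] at hmul
      have hdiv : ((3:ℝ)/2) ^ lamt * K * ((n:ℝ)+3) ^ (lamt-2) / ((n:ℝ)+4) ^ lamt
          ≤ ((3:ℝ)/2) ^ lamt * C * ((((n:ℝ)+3) ^ (lamt-1) - ((n:ℝ)+2) ^ (lamt-1)) / ((n:ℝ)+4) ^ lamt) := by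
        calc ((3:ℝ)/2) ^ lamt * K * ((n:ℝ)+3) ^ (lamt-2) / ((n:ℝ)+4) ^ lamt
            ≤ ((3:ℝ)/2) ^ lamt * C * (((n:ℝ)+3) ^ (lamt-1) - ((n:ℝ)+2) ^ (lamt-1)) / ((n:ℝ)+4) ^ lamt := by
              gcongr
          _ = ((3:ℝ)/2) ^ lamt * C * ((((n:ℝ)+3) ^ (lamt-1) - ((n:ℝ)+2) ^ (lamt-1)) / ((n:ℝ)+4) ^ lamt) := by
              ring
      have := hfirst.trans hdiv
      have efin : ((3:ℝ)/2) ^ lamt * C * ((((n:ℝ)+3) ^ (lamt-1) - ((n:ℝ)+2) ^ (lamt-1)) / ((n:ℝ)+4) ^ lamt)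
          = ((3:ℝ)/2) ^ lamt * C * (((n:ℝ)+3) ^ (lamt-1) / ((n:ℝ)+4) ^ lamt)
            - ((3:ℝ)/2) ^ lamt * C * (((n:ℝ)+2) ^ (lamt-1) / ((n:ℝ)+4) ^ lamt) := by
        ring
      rw [efin] at this
      linarith
    -- finish
    have final : x (n + 1 + 1) ≤ ((3:ℝ)/2) ^ lamt * C * (((n:ℝ)+3) ^ (lamt-1) / ((n:ℝ)+4) ^ lamt)
        + ((2:ℝ)/((n:ℝ)+4)) ^ lamt * x 0 := by
      calc x (n + 1 + 1) ≤ K / ((n:ℝ)+3)^2 + r * (A + B * x 0) := step1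
        _ = K / ((n:ℝ)+3)^2 + r * A + (r * B) * x 0 := by ring
        _ = K / ((n:ℝ)+3)^2 + ((3:ℝ)/2) ^ lamt * C * (((n:ℝ)+2) ^ (lamt-1) / ((n:ℝ)+4) ^ lamt)
            + ((2:ℝ)/((n:ℝ)+4)) ^ lamt * x 0 := by rw [hrA, hrB]
        _ ≤ _ := by linarith
    have ecast2 : ((n + 1 : ℕ) : ℝ) + 2 = (n:ℝ) + 3 := by push_cast; ring
    have ecast3 : ((n + 1 : ℕ) : ℝ) + 3 = (n:ℝ) + 4 := by push_cast; ring
    rw [ecast2, ecast3]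
    exact final
end

section
/- Let λ > 0, c ≥ 0, and let (x_t)_{t≥0} be a sequence of nonnegative real numbers satisfying the recursion x_{t+1} ≤ c·α_t² + (1 − λα_t)·x_t for all t ≥ 0, where α_t = 1/(λ(t+1)). Then for all T ≥ 0, x_{T+1} ≤ (c/λ²) · (1/(T+1)) · ∑_{s=1}^{T+1} 1/s ≤ (c/λ²) · (1 + log(T+1))/(T+1). -/
lemma harm_le_log (n : ℕ) :
    ∑ s ∈ Finset.Icc 1 (n + 1), (1 / (s : ℝ)) ≤ 1 + Real.log ((n : ℝ) + 1) := by
  induction n with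
  | zero => simp
  | succ n ih =>
      have hsum : ∑ s ∈ Finset.Icc 1 (n + 2), (1 / (s : ℝ))
          = (∑ s ∈ Finset.Icc 1 (n + 1), (1 / (s : ℝ))) + 1 / ((n : ℝ) + 2) := by
        rw [show n + 2 = (n + 1) + 1 from rfl, Finset.sum_Icc_succ_top (by omega)]
        push_cast; ring
      have hp1 : (0:ℝ) < (n : ℝ) + 1 := by positivity
      have hp2 : (0:ℝ) < (n : ℝ) + 2 := by positivity
      have hlog : Real.log (((n:ℝ)+1) / ((n:ℝ)+2)) ≤ ((n:ℝ)+1)/((n:ℝ)+2) - 1 :=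
        Real.log_le_sub_one_of_pos (by positivity)
      have hdiv : Real.log (((n:ℝ)+1) / ((n:ℝ)+2)) =
          Real.log ((n:ℝ)+1) - Real.log ((n:ℝ)+2) := Real.log_div (by positivity) (by positivity)
      have key : 1 / ((n:ℝ)+2) ≤ Real.log ((n:ℝ)+2) - Real.log ((n:ℝ)+1) := by
        rw [hdiv] at hlog
        have h3 : ((n:ℝ)+1)/((n:ℝ)+2) - 1 = -(1/((n:ℝ)+2)) := by
          field_simp
          norm_num
        linarith
      rw [hsum]
      have h4 : ((n:ℝ)+1+1) = (n:ℝ)+2 := by ring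
      push_cast
      rw [h4]
      linarith

/-- deterministic recursion lemma. If `x_{t+1} ≤ c α_t² + (1 − λα_t) x_t` with
`α_t = 1/(λ(t+1))`, `λ > 0`, `c ≥ 0`, then
`x_{T+1} ≤ (c/λ²)(1/(T+1)) ∑_{s=1}^{T+1} 1/s ≤ (c/λ²)(1 + log(T+1))/(T+1)`. -/
theorem recursion_bound_log_stepsize
    (lam c : ℝ) (hlam : 0 < lam) (hc : 0 ≤ c)
    (x : ℕ → ℝ) (hx : ∀ t, 0 ≤ x t)
    (hrec : ∀ t : ℕ, x (t + 1) ≤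
      c * (1 / (lam * ((t : ℝ) + 1))) ^ 2 +
        (1 - lam * (1 / (lam * ((t : ℝ) + 1)))) * x t) :
    ∀ T : ℕ,
      x (T + 1) ≤ (c / lam ^ 2) * (1 / ((T : ℝ) + 1)) * ∑ s ∈ Finset.Icc 1 (T + 1), (1 / (s : ℝ)) ∧
      (c / lam ^ 2) * (1 / ((T : ℝ) + 1)) * ∑ s ∈ Finset.Icc 1 (T + 1), (1 / (s : ℝ)) ≤
        (c / lam ^ 2) * ((1 + Real.log ((T : ℝ) + 1)) / ((T : ℝ) + 1)) := by
  have hlam' : lam ≠ 0 := ne_of_gt hlam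
  -- simplified recursion: x (t+1) ≤ c/(lam^2 (t+1)^2) + (t/(t+1)) x t
  have hrec' : ∀ t : ℕ, x (t + 1) ≤
      c / (lam ^ 2 * ((t:ℝ)+1)^2) + ((t:ℝ)/((t:ℝ)+1)) * x t := by
    intro t
    have ht : ((t:ℝ)+1) ≠ 0 := by positivity
    have := hrec t
    have h1 : c * (1 / (lam * ((t : ℝ) + 1))) ^ 2 = c / (lam ^ 2 * ((t:ℝ)+1)^2) := by
      rw [div_pow, one_pow, mul_pow]; ring
    have h2 : (1 - lam * (1 / (lam * ((t : ℝ) + 1)))) = (t:ℝ)/((t:ℝ)+1) := by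
      field_simp
      ring
    rw [h1, h2] at this
    exact this
  have main : ∀ T : ℕ,
      x (T + 1) ≤ (c / lam ^ 2) * (1 / ((T : ℝ) + 1)) * ∑ s ∈ Finset.Icc 1 (T + 1), (1 / (s : ℝ)) := by
    intro T
    induction T with
    | zero =>
        have := hrec' 0
        simpa using this.trans (by norm_num)
    | succ T ih =>
        have hp1 : (0:ℝ) < (T:ℝ)+1 := by positivity
        have hp2 : (0:ℝ) < (T:ℝ)+2 := by positivity
        have hsum : ∑ s ∈ Finset.Icc 1 (T + 2), (1 / (s : ℝ))
            = (∑ s ∈ Finset.Icc 1 (T + 1), (1 / (s : ℝ))) + 1 / ((T : ℝ) + 2) := by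
          rw [show T + 2 = (T + 1) + 1 from rfl, Finset.sum_Icc_succ_top (by omega)]
          push_cast; ring
        have hr := hrec' (T + 1)
        push_cast at hr
        have hmono : (((T:ℝ)+1)/((T:ℝ)+2)) * x (T+1) ≤
            (((T:ℝ)+1)/((T:ℝ)+2)) * ((c / lam ^ 2) * (1 / ((T : ℝ) + 1)) * ∑ s ∈ Finset.Icc 1 (T + 1), (1 / (s : ℝ))) :=
          mul_le_mul_of_nonneg_left ih (by positivity)
        have heq : (((T:ℝ)+1)/((T:ℝ)+2)) * ((c / lam ^ 2) * (1 / ((T : ℝ) + 1)) * ∑ s ∈ Finset.Icc 1 (T + 1), (1 / (s : ℝ)))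
            = (c / lam ^ 2) * (1 / ((T : ℝ) + 2)) * ∑ s ∈ Finset.Icc 1 (T + 1), (1 / (s : ℝ)) := by
          have ha : ((T:ℝ)+1) * (1/((T:ℝ)+1)) = 1 := by
            rw [mul_one_div, div_self (ne_of_gt hp1)]
          calc ((T:ℝ)+1)/((T:ℝ)+2) * ((c / lam ^ 2) * (1 / ((T : ℝ) + 1)) * ∑ s ∈ Finset.Icc 1 (T + 1), (1 / (s : ℝ)))
              = (c / lam ^ 2) * (1 / ((T : ℝ) + 2)) * (∑ s ∈ Finset.Icc 1 (T + 1), (1 / (s : ℝ))) * (((T:ℝ)+1) * (1/((T:ℝ)+1))) := by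
                ring
            _ = (c / lam ^ 2) * (1 / ((T : ℝ) + 2)) * ∑ s ∈ Finset.Icc 1 (T + 1), (1 / (s : ℝ)) := by
                rw [ha, mul_one]
        have hc2 : c / (lam ^ 2 * ((T:ℝ)+2)^2) = (c / lam ^ 2) * (1 / ((T : ℝ) + 2)) * (1 / ((T:ℝ)+2)) := by
          field_simp
          try ring
          try exact Or.inl trivial
        calc x (T + 1 + 1) ≤ c / (lam ^ 2 * ((T:ℝ)+2)^2) + (((T:ℝ)+1)/((T:ℝ)+2)) * x (T+1) := by
              convert hr using 3 <;> ring
          _ ≤ (c / lam ^ 2) * (1 / ((T : ℝ) + 2)) * (1 / ((T:ℝ)+2))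
                + (c / lam ^ 2) * (1 / ((T : ℝ) + 2)) * ∑ s ∈ Finset.Icc 1 (T + 1), (1 / (s : ℝ)) := by
              rw [← hc2, ← heq]; linarith
          _ = (c / lam ^ 2) * (1 / (((T:ℕ) + 1 : ℕ) + 1 : ℝ)) * ∑ s ∈ Finset.Icc 1 (T + 1 + 1), (1 / (s : ℝ)) := by
              rw [show T + 1 + 1 = T + 2 from rfl, hsum]
              push_cast; ring
  intro T
  refine ⟨main T, ?_⟩
  have h := harm_le_log T
  have hp : (0:ℝ) < (T:ℝ)+1 := by positivity
  have : (c / lam ^ 2) * ((1 + Real.log ((T : ℝ) + 1)) / ((T : ℝ) + 1))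
      = (c / lam ^ 2) * (1 / ((T : ℝ) + 1)) * (1 + Real.log ((T : ℝ) + 1)) := by ring
  rw [this]
  exact mul_le_mul_of_nonneg_left h (by positivity)
end
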